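/- For all integers n and d with 1 < d ≤ n/2, there exists a Boolean function f : {0,1}^n → {0,1} that is computed by some nondeterministic OBDD of width at most d but by no nondeterministic OBDD of width at most d − 1; consequently the class of functions computed by NOBDDs of width at most d − 1 is strictly contained in the class computed by NOBDDs of width at most d. -/

import Mathlib

/-!
`MOD_d` (the number of ones is divisible by `d`) is computed by the cyclic counter on `d` nodes.
It has a fooling set of size `d` for every variable order: with `k = d - 1`, combine `a` ones
among the first `k` variables read with `d - b` ones among the next `d` variables (`a, b < d`).
Such an input is accepted iff `a = b`, so the nodes through which the inputs with `a = b` pass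
after level `k` on accepting paths are pairwise distinct, and any NOBDD for `MOD_d` has width at
least `d`.
-/

/-- Number of 1s in a binary string ν ∈ {0,1}^n. -/
def countOnes {n : ℕ} (ν : Fin n → Bool) : ℕ :=
  (Finset.univ.filter (fun i => ν i = true)).card

/-- Number of 0s in a binary string ν ∈ {0,1}^n. -/
def countZeros {n : ℕ} (ν : Fin n → Bool) : ℕ :=
  (Finset.univ.filter (fun i => ν i = false)).card

/-- Number of 1s among the first `k` bits. -/
def countOnesFirst (k : ℕ) {n : ℕ} (ν : Fin n → Bool) : ℕ :=
  (Finset.univ.filter (fun i : Fin n => (i : ℕ) < k ∧ ν i = true)).card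

/-- Number of 0s among the first `k` bits. -/
def countZerosFirst (k : ℕ) {n : ℕ} (ν : Fin n → Bool) : ℕ :=
  (Finset.univ.filter (fun i : Fin n => (i : ℕ) < k ∧ ν i = false)).card

/-- A deterministic OBDD of width `d` on `n` Boolean variables. -/
structure DOBDD (n d : ℕ) where
  ord : Equiv.Perm (Fin n)
  T : Fin n → Bool → Fin d → Fin d
  start : Fin d
  Accept : Finset (Fin d)

/-- The node reached by a deterministic OBDD after reading all input bits. -/
def DOBDD.run {n d : ℕ} (M : DOBDD n d) (ν : Fin n → Bool) : Fin d :=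
  (List.finRange n).foldl (fun v j => M.T j (ν (M.ord j)) v) M.start

def DOBDD.accepts {n d : ℕ} (M : DOBDD n d) (ν : Fin n → Bool) : Prop :=
  M.run ν ∈ M.Accept

/-- A deterministic OBDD computes a total Boolean function. -/
def DOBDD.computes {n d : ℕ} (M : DOBDD n d) (f : (Fin n → Bool) → Bool) : Prop :=
  ∀ ν, M.accepts ν ↔ f ν = true

/-- A nondeterministic OBDD of width `d` on `n` Boolean variables. -/
structure NOBDD (n d : ℕ) where
  ord : Equiv.Perm (Fin n)
  T : Fin n → Bool → Fin d → Set (Fin d)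
  start : Fin d
  Accept : Finset (Fin d)

/-- The set of nodes reachable by a nondeterministic OBDD after reading all input bits. -/
def NOBDD.reach {n d : ℕ} (M : NOBDD n d) (ν : Fin n → Bool) : Set (Fin d) :=
  (List.finRange n).foldl (fun S j => {w | ∃ v ∈ S, w ∈ M.T j (ν (M.ord j)) v}) {M.start}

def NOBDD.accepts {n d : ℕ} (M : NOBDD n d) (ν : Fin n → Bool) : Prop :=
  ∃ v ∈ M.reach ν, v ∈ M.Accept

/-- A nondeterministic OBDD computes a total Boolean function. -/
def NOBDD.computes {n d : ℕ} (M : NOBDD n d) (f : (Fin n → Bool) → Bool) : Prop :=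
  ∀ ν, M.accepts ν ↔ f ν = true

/-- The class of Boolean functions on n variables computed by deterministic
OBDDs of width at most `w`. -/
def OBDDclass (n w : ℕ) : Set ((Fin n → Bool) → Bool) :=
  {f | ∃ d, d ≤ w ∧ ∃ M : DOBDD n d, M.computes f}

/-- The class of Boolean functions on n variables computed by nondeterministic
OBDDs of width at most `w`. -/
def NOBDDclass (n w : ℕ) : Set ((Fin n → Bool) → Bool) :=
  {f | ∃ d, d ≤ w ∧ ∃ M : NOBDD n d, M.computes f}

/-- Final probability distribution of a stable probabilistic OBDD given by the pair of
left-stochastic matrices `A`, variable order `ord`, and initial node `s`. -/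
noncomputable def stableProbRun {n d : ℕ} (A : Bool → Matrix (Fin d) (Fin d) ℝ)
    (ord : Equiv.Perm (Fin n)) (s : Fin d) (ν : Fin n → Bool) : Fin d → ℝ :=
  (List.finRange n).foldl (fun v j => (A (ν (ord j))).mulVec v)
    (fun i => if i = s then 1 else 0)

/-- Final quantum state of a stable ID quantum OBDD given by the pair of matrices `U`
and the initial computational-basis state `q0`, reading bits in the natural order. -/
noncomputable def quantumRunStable {n d : ℕ} (U : Bool → Matrix (Fin d) (Fin d) ℂ) (q0 : Fin d)
    (ν : Fin n → Bool) : Fin d → ℂ :=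
  (List.finRange n).foldl (fun ψ j => (U (ν j)).mulVec ψ)
    (fun i => if i = q0 then 1 else 0)

/-- A quantum OBDD of width `d` on `n` Boolean variables. -/
structure QOBDD (n d : ℕ) where
  ord : Equiv.Perm (Fin n)
  U : Fin n → Bool → Matrix (Fin d) (Fin d) ℂ
  unitary : ∀ j b, U j b ∈ Matrix.unitaryGroup (Fin d) ℂ
  q0 : Fin d
  Accept : Finset (Fin d)

/-- The final state of a quantum OBDD on input ν. -/
noncomputable def QOBDD.finalState {n d : ℕ} (M : QOBDD n d) (ν : Fin n → Bool) : Fin d → ℂ :=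
  (List.finRange n).foldl (fun ψ j => (M.U j (ν (M.ord j))).mulVec ψ)
    (fun i => if i = M.q0 then 1 else 0)

/-- The acceptance probability of a quantum OBDD on input ν. -/
noncomputable def QOBDD.acceptProb {n d : ℕ} (M : QOBDD n d) (ν : Fin n → Bool) : ℝ :=
  ∑ i ∈ M.Accept, Complex.normSq (M.finalState ν i)

/-- `NotO_n(ν) = 0` iff `#0(ν) = #1(ν)`. -/
def NotO (n : ℕ) (ν : Fin n → Bool) : Bool := !decide (countZeros ν = countOnes ν)

/-- `NotSQUARE_n(ν) = 0` iff `(#0(ν))² = #1(ν)`. -/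
def NotSQUARE (n : ℕ) (ν : Fin n → Bool) : Bool := !decide ((countZeros ν) ^ 2 = countOnes ν)

/-- `NotPOWER_n(ν) = 0` iff `2^{#0(ν)} = #1(ν)`. -/
def NotPOWER (n : ℕ) (ν : Fin n → Bool) : Bool := !decide (2 ^ (countZeros ν) = countOnes ν)

/-- `MOD^k_n(ν) = 1` iff `#1(ν) ≡ 0 (mod k)`. -/
def MODf (n k : ℕ) (ν : Fin n → Bool) : Bool := decide (countOnes ν % k = 0)

/-- `NotO^k_n(ν) = 0` iff `#^k_0(ν) = #^k_1(ν) = k/2`. -/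
def NotOk (n k : ℕ) (ν : Fin n → Bool) : Bool :=
  !decide (countZerosFirst k ν = k / 2 ∧ countOnesFirst k ν = k / 2)

/-- The ordered subsequence of value bits `ν_{2i}` (1-indexed, `1 ≤ i ≤ k/2`) whose
marker bit `ν_{2i-1}` equals `b`; `b = false` gives `α(ν)` and `b = true` gives `β(ν)`. -/
def valueSubseq {n : ℕ} (k : ℕ) (b : Bool) (ν : Fin n → Bool) : List Bool :=
  (List.range (k / 2)).filterMap (fun j =>
    if h : 2 * j + 1 < n then
      if ν ⟨2 * j, by omega⟩ = b then some (ν ⟨2 * j + 1, h⟩) else none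
    else none)

/-- `EQS^k_n(ν) = 1` iff `α(ν) = β(ν)`. -/
def EQS (n k : ℕ) (ν : Fin n → Bool) : Bool :=
  decide (valueSubseq k false ν = valueSubseq k true ν)

/-- `NotEQS^k_n(ν) = 1 - EQS^k_n(ν)`. -/
def NotEQS (n k : ℕ) (ν : Fin n → Bool) : Bool := !(EQS n k ν)

def spliceAt {n : ℕ} (k : ℕ) (x y : Fin n → Bool) : Fin n → Bool :=
  fun j => if (j : ℕ) < k then x j else y j

lemma countOnes_comp_perm {n : ℕ} (g : Fin n → Bool) (σ : Equiv.Perm (Fin n)) :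
    countOnes (g ∘ σ) = countOnes g := by
  simp only [countOnes, Finset.card_filter]
  exact Equiv.sum_comp σ fun i => if g i = true then 1 else 0

lemma countOnes_Ico {n p q : ℕ} (hpq : p ≤ q) (hq : q ≤ n) :
    countOnes (fun j : Fin n => decide (p ≤ (j : ℕ) ∧ (j : ℕ) < q)) = q - p := by
  have hsdiff :
      (Finset.univ.filter fun j : Fin n => decide (p ≤ (j : ℕ) ∧ (j : ℕ) < q) = true) =
      (Finset.univ.filter fun j : Fin n => (j : ℕ) < q) \
        (Finset.univ.filter fun j : Fin n => (j : ℕ) < p) := by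
    ext j
    simp only [Finset.mem_filter, Finset.mem_univ, true_and, Finset.mem_sdiff, decide_eq_true_eq]
    omega
  rw [countOnes, hsdiff, Finset.card_sdiff_of_subset, Fin.card_filter_val_lt,
    Fin.card_filter_val_lt]
  · omega
  · intro j
    simp only [Finset.mem_filter, Finset.mem_univ, true_and]
    omega

namespace NOBDD

variable {n w : ℕ} (M : NOBDD n w)

/-- `g` is indexed by level, not by variable: level `j` reads `g j`, so the input is
`g ∘ M.ord.symm`. -/
def run (l : List (Fin n)) (g : Fin n → Bool) (S : Set (Fin w)) : Set (Fin w) :=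
  l.foldl (fun S j => {v' | ∃ v ∈ S, v' ∈ M.T j (g j) v}) S

lemma reach_eq_run (ν : Fin n → Bool) :
    M.reach ν = M.run (List.finRange n) (ν ∘ M.ord) {M.start} := rfl

lemma mem_run_iff (l : List (Fin n)) (g : Fin n → Bool) (S : Set (Fin w)) (v' : Fin w) :
    v' ∈ M.run l g S ↔ ∃ v ∈ S, v' ∈ M.run l g {v} := by
  induction l generalizing S with
  | nil => simp [run]
  | cons j l ih =>
    simp only [run, List.foldl_cons] at ih ⊢
    rw [ih]
    constructor
    · rintro ⟨u, ⟨v, hv, hu⟩, hv'⟩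
      exact ⟨v, hv, (ih _).2 ⟨u, ⟨v, rfl, hu⟩, hv'⟩⟩
    · rintro ⟨v, hv, hv'⟩
      obtain ⟨u, ⟨v₀, hv₀, hu⟩, hv'⟩ := (ih _).1 hv'
      exact ⟨u, ⟨v, hv, Set.mem_singleton_iff.1 hv₀ ▸ hu⟩, hv'⟩

lemma run_append (l₁ l₂ : List (Fin n)) (g : Fin n → Bool) (S : Set (Fin w)) :
    M.run (l₁ ++ l₂) g S = M.run l₂ g (M.run l₁ g S) :=
  List.foldl_append

lemma run_congr {l : List (Fin n)} {g g' : Fin n → Bool} (h : ∀ j ∈ l, g j = g' j)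
    (S : Set (Fin w)) : M.run l g S = M.run l g' S :=
  List.foldl_ext _ _ _ fun S j hj => by rw [h j hj]

lemma run_spliceAt_take (k : ℕ) (x y : Fin n → Bool) (S : Set (Fin w)) :
    M.run ((List.finRange n).take k) (spliceAt k x y) S = M.run ((List.finRange n).take k) x S := by
  refine M.run_congr (fun j hj => ?_) S
  simp only [List.mem_take_iff_getElem, List.getElem_finRange, List.length_finRange,
    lt_inf_iff] at hj
  obtain ⟨i, ⟨hik, -⟩, rfl⟩ := hj
  simp [spliceAt, hik]

lemma run_spliceAt_drop (k : ℕ) (x y : Fin n → Bool) (S : Set (Fin w)) :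
    M.run ((List.finRange n).drop k) (spliceAt k x y) S = M.run ((List.finRange n).drop k) y S := by
  refine M.run_congr (fun j hj => ?_) S
  simp only [List.mem_iff_getElem, List.getElem_drop, List.getElem_finRange,
    List.length_drop, List.length_finRange] at hj
  obtain ⟨i, -, rfl⟩ := hj
  simp [spliceAt]

lemma accepts_iff_exists_cut (k : ℕ) (g : Fin n → Bool) :
    M.accepts (g ∘ M.ord.symm) ↔ ∃ v ∈ M.run ((List.finRange n).take k) g {M.start},
      ∃ v' ∈ M.run ((List.finRange n).drop k) g {v}, v' ∈ M.Accept := by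
  have hg : g ∘ M.ord.symm ∘ M.ord = g := by ext; simp
  rw [accepts, reach_eq_run, Function.comp_assoc, hg, ← List.take_append_drop k (List.finRange n),
    run_append]
  simp only [List.take_append_drop]
  constructor
  · rintro ⟨v', hv', hacc⟩
    obtain ⟨v, hv, hv'⟩ := (M.mem_run_iff _ _ _ _).1 hv'
    exact ⟨v, hv, v', hv', hacc⟩
  · rintro ⟨v, hv, v', hv', hacc⟩
    exact ⟨v', (M.mem_run_iff _ _ _ _).2 ⟨v, hv, hv'⟩, hacc⟩

theorem card_le_width_of_fooling {ι : Type*} [Fintype ι] (k : ℕ) (x y : ι → Fin n → Bool)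
    (hdiag : ∀ a, M.accepts (spliceAt k (x a) (y a) ∘ M.ord.symm))
    (hoff : ∀ a b, M.accepts (spliceAt k (x a) (y b) ∘ M.ord.symm) →
      M.accepts (spliceAt k (x b) (y a) ∘ M.ord.symm) → a = b) :
    Fintype.card ι ≤ w := by
  have hcut := fun a b => M.accepts_iff_exists_cut k (spliceAt k (x a) (y b))
  simp only [run_spliceAt_take, run_spliceAt_drop] at hcut
  choose v hv hacc using fun a => (hcut a a).1 (hdiag a)
  have hinj : Function.Injective v := fun a b hab =>
    hoff a b ((hcut a b).2 ⟨v a, hv a, hab ▸ hacc b⟩)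
      ((hcut b a).2 ⟨v b, hv b, hab ▸ hacc a⟩)
  simpa using Fintype.card_le_of_injective v hinj

end NOBDD

lemma NOBDDclass_mono {n w w' : ℕ} (h : w ≤ w') : NOBDDclass n w ⊆ NOBDDclass n w' :=
  fun _ ⟨d, hd, M, hM⟩ => ⟨d, hd.trans h, M, hM⟩

section ModCounter

open Fin.NatCast Fin.CommRing

def modCounter (n d : ℕ) [NeZero d] : NOBDD n d where
  ord := Equiv.refl _
  T _ b v := {v + if b then 1 else 0}
  start := 0
  Accept := {0}

variable {n d : ℕ} [NeZero d]

lemma modCounter_run (l : List (Fin n)) (g : Fin n → Bool) (s : Fin d) :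
    (modCounter n d).run l g {s} = {s + (l.map fun j => if g j then 1 else 0).sum} := by
  induction l generalizing s with
  | nil => simp [NOBDD.run]
  | cons j l ih =>
    simp only [NOBDD.run, List.foldl_cons, modCounter, Set.mem_singleton_iff, exists_eq_left,
      Set.ofPred_eq_eq_singleton] at ih ⊢
    rw [ih, List.map_cons, List.sum_cons, add_assoc]

lemma modCounter_reach (ν : Fin n → Bool) :
    (modCounter n d).reach ν = {((countOnes ν : ℕ) : Fin d)} := by
  rw [NOBDD.reach_eq_run, modCounter_run]
  change ({0 + ((List.finRange n).map fun j => if ν j then 1 else 0).sum} : Set (Fin d)) = _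
  rw [zero_add, ← Fin.sum_univ_def, countOnes, Finset.card_filter]
  push_cast
  rfl

lemma modCounter_computes : (modCounter n d).computes (MODf n d) := by
  intro ν
  simp only [NOBDD.accepts, modCounter_reach, Set.mem_singleton_iff, exists_eq_left]
  simp [modCounter, MODf, Fin.natCast_eq_zero, Nat.dvd_iff_mod_eq_zero]

end ModCounter

lemma MODf_mem_NOBDDclass {n d : ℕ} (hd : 0 < d) : MODf n d ∈ NOBDDclass n d :=
  have : NeZero d := ⟨hd.ne'⟩
  ⟨d, le_rfl, modCounter n d, modCounter_computes⟩

lemma add_sub_mod_eq_zero_iff {a b d : ℕ} (ha : a < d) (hb : b < d) :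
    (a + (d - b)) % d = 0 ↔ a = b := by
  rcases le_or_gt b a with hba | hab
  · rw [show a + (d - b) = a - b + d by omega, Nat.add_mod_right, Nat.mod_eq_of_lt (by omega)]
    omega
  · rw [Nat.mod_eq_of_lt (by omega)]
    omega

lemma MODf_not_mem_NOBDDclass {n d : ℕ} (hd : 0 < d) (hn : 2 * d ≤ n + 1) :
    MODf n d ∉ NOBDDclass n (d - 1) := by
  rintro ⟨w, hw, M, hM⟩
  set k := d - 1
  let x : Fin d → Fin n → Bool := fun a j => decide (k - a ≤ (j : ℕ))
  let y : Fin d → Fin n → Bool := fun b j => decide ((j : ℕ) < k + (d - b))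
  have hacc : ∀ a b, M.accepts (spliceAt k (x a) (y b) ∘ M.ord.symm) ↔ a = b := by
    intro a b
    have hsplice : spliceAt k (x a) (y b) =
        fun j : Fin n => decide (k - a ≤ (j : ℕ) ∧ (j : ℕ) < k + (d - b)) := by
      ext j
      simp only [spliceAt, x, y]
      split_ifs <;> simp only [decide_eq_decide] <;> omega
    have hcount : k + (d - b) - (k - a) = a + (d - b) := by omega
    rw [hM, MODf, countOnes_comp_perm, hsplice, countOnes_Ico (by omega) (by omega), hcount,
      decide_eq_true_iff, add_sub_mod_eq_zero_iff a.isLt b.isLt, Fin.val_inj]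
  have := M.card_le_width_of_fooling k x y (fun a => (hacc a a).2 rfl)
    (fun a b hab _ => (hacc a b).1 hab)
  rw [Fintype.card_fin] at this
  omega

/-- For all `n, d` with `1 < d ≤ n/2`, there is a Boolean function computed by a
nondeterministic OBDD of width at most `d` but by none of width at most `d - 1`;
consequently `NOBDD^{d-1} ⊊ NOBDD^d`. -/
theorem nondeterministic_width_hierarchy (n d : ℕ) (h1 : 1 < d) (h2 : d ≤ n / 2) :
    (∃ f : (Fin n → Bool) → Bool, f ∈ NOBDDclass n d ∧ f ∉ NOBDDclass n (d - 1)) ∧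
    NOBDDclass n (d - 1) ⊂ NOBDDclass n d := by
  have hmem := MODf_mem_NOBDDclass (n := n) (d := d) (by omega)
  have hnot := MODf_not_mem_NOBDDclass (n := n) (d := d) (by omega) (by omega)
  exact ⟨⟨MODf n d, hmem, hnot⟩,
    (Set.ssubset_iff_of_subset (NOBDDclass_mono (Nat.sub_le d 1))).2 ⟨_, hmem, hnot⟩⟩
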